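/- arXiv:2209.08086 — 2 statements merged into one kernel-verified Lean document; each statement's English description precedes it below -/
import Mathlib

section
/- Let k0 > 0, f : ℝ³ → ℝ be integrable, R_s, R_t ∈ SO(3), and d_s, d_t ∈ ℝ³. (i) If R_s·e3 = R_t·e3 and α ∈ ℝ is such that R_sᵀR_t = Q³(α), then for all k ∈ B with μ_s(k) ≠ 0: e^{i⟨R_t·d_t − R_s·d_s, R_s·h(k)⟩} = μ_s(k) / μ_t(Q(−α)·k). (ii) If R_s·e3 = −R_t·e3 and α ∈ ℝ is such that R_sᵀR_t = Q²(π)·Q³(α), then for all k ∈ B with μ_s(k) ≠ 0: e^{i⟨R_t·d_t − R_s·d_s, R_s·h(k)⟩} = μ_s(k) / conj(μ_t(Q(−α)·S·k)). -/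
noncomputable section
open Real Set MeasureTheory
open scoped RealInnerProductSpace

abbrev R3 : Type := EuclideanSpace ℝ (Fin 3)
abbrev R2 : Type := EuclideanSpace ℝ (Fin 2)
abbrev Mat3 : Type := Matrix (Fin 3) (Fin 3) ℝ

def SO3 (R : Mat3) : Prop := R.transpose * R = 1 ∧ R.det = 1

def e3 : R3 := WithLp.toLp 2 (![0, 0, 1] : Fin 3 → ℝ)

def act3 (R : Mat3) (x : R3) : R3 := WithLp.toLp 2 (R.mulVec x)

def cross3 (x y : R3) : R3 := WithLp.toLp 2 (crossProduct x y)

def rotE3 (R : Mat3) : R3 := act3 R e3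

def v1 (Rs Rt : Mat3) : R3 := ‖rotE3 Rs + rotE3 Rt‖⁻¹ • (rotE3 Rs + rotE3 Rt)

def v2 (Rs Rt : Mat3) : R3 :=
  ‖cross3 (rotE3 Rs) (rotE3 Rt)‖⁻¹ • cross3 (rotE3 Rs) (rotE3 Rt)

def v3 (Rs Rt : Mat3) : R3 := ‖rotE3 Rs - rotE3 Rt‖⁻¹ • (rotE3 Rs - rotE3 Rt)

def aRad (k0 : ℝ) (Rs Rt : Mat3) : ℝ := k0 / 2 * ‖rotE3 Rs + rotE3 Rt‖

def sigmaArc (k0 : ℝ) (Rs Rt : Mat3) (β : ℝ) : R3 :=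
  (aRad k0 Rs Rt * (Real.cos β - 1)) • v1 Rs Rt + (aRad k0 Rs Rt * Real.sin β) • v2 Rs Rt

def cST (Rs Rt : Mat3) : ℝ := ⟪rotE3 Rs, rotE3 Rt⟫

def Jset (Rs Rt : Mat3) : Set ℝ :=
  if cST Rs Rt ≤ 0 then Ioc (-π) π
  else Ioo (-(Real.arccos ((cST Rs Rt - 1) / (cST Rs Rt + 1))))
    (Real.arccos ((cST Rs Rt - 1) / (cST Rs Rt + 1)))

def kappa (k0 : ℝ) (k : R2) : ℝ := Real.sqrt (k0 ^ 2 - ‖k‖ ^ 2)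

def hmap (k0 : ℝ) (k : R2) : R3 := WithLp.toLp 2 (![k 0, k 1, kappa k0 k - k0] : Fin 3 → ℝ)

def ball2 (k0 : ℝ) : Set R2 := {k | ‖k‖ < k0}

def Hemi (k0 : ℝ) (R : Mat3) : Set R3 := (fun k => act3 R (hmap k0 k)) '' ball2 k0

def Q2mat (α : ℝ) : Mat3 :=
  !![Real.cos α, 0, Real.sin α; 0, 1, 0; -Real.sin α, 0, Real.cos α]

def Q3mat (α : ℝ) : Mat3 :=
  !![Real.cos α, -Real.sin α, 0; Real.sin α, Real.cos α, 0; 0, 0, 1]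

/-- The 3D Fourier transform `𝓕f(y) = (2π)^{−3/2} ∫ f(x) e^{−i⟨x,y⟩} dx`. -/
def FT (f : R3 → ℝ) (y : R3) : ℂ :=
  ((2 * π : ℝ) ^ (-(3 : ℝ) / 2) : ℝ) *
    ∫ x : R3, (f x : ℂ) * Complex.exp (-Complex.I * (⟪x, y⟫ : ℝ))

/-- The scaled squared energy `ν_R(k) = |𝓕f(R·h(k))|²`. -/
def nu (k0 : ℝ) (f : R3 → ℝ) (R : Mat3) (k : R2) : ℝ :=
  ‖FT f (act3 R (hmap k0 k))‖ ^ 2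

def rot2 (α : ℝ) : Matrix (Fin 2) (Fin 2) ℝ :=
  !![Real.cos α, -Real.sin α; Real.sin α, Real.cos α]

def act2 (Q : Matrix (Fin 2) (Fin 2) ℝ) (k : R2) : R2 := WithLp.toLp 2 (Q.mulVec k)

def Smat : Matrix (Fin 2) (Fin 2) ℝ := !![1, 0; 0, -1]

/-- The scaled measurement data `μ(k) = 𝓕f(R·h(k))·e^{−i⟨d, h(k)⟩}` for a rotation `R` and a
translation `d`. -/
def muData (k0 : ℝ) (f : R3 → ℝ) (R : Mat3) (d : R3) (k : R2) : ℂ :=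
  FT f (act3 R (hmap k0 k)) * Complex.exp (-Complex.I * (⟪d, hmap k0 k⟫ : ℝ))



theorem inner_toLp_mulVec_toLp_mulVec {n : ℕ} {Q : Matrix (Fin n) (Fin n) ℝ}
    (hQ : Q.transpose * Q = 1) (x y : EuclideanSpace ℝ (Fin n)) :
    ⟪WithLp.toLp 2 (Q.mulVec x), WithLp.toLp 2 (Q.mulVec y)⟫ = ⟪x, y⟫ := by
  simp only [EuclideanSpace.inner_eq_star_dotProduct, star_trivial]
  rw [Matrix.dotProduct_mulVec, ← Matrix.mulVec_transpose, Matrix.mulVec_mulVec, hQ,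
    Matrix.one_mulVec]

theorem norm_toLp_mulVec {n : ℕ} {Q : Matrix (Fin n) (Fin n) ℝ} (hQ : Q.transpose * Q = 1)
    (x : EuclideanSpace ℝ (Fin n)) : ‖WithLp.toLp 2 (Q.mulVec x)‖ = ‖x‖ := by
  rw [norm_eq_sqrt_real_inner, norm_eq_sqrt_real_inner, inner_toLp_mulVec_toLp_mulVec hQ]

theorem act3_mul (A B : Mat3) (x : R3) : act3 (A * B) x = act3 A (act3 B x) := by
  simp only [act3, Matrix.mulVec_mulVec]

theorem act3_neg (A : Mat3) (x : R3) : act3 A (-x) = -act3 A x := by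
  simp only [act3, WithLp.ofLp_neg, Matrix.mulVec_neg, WithLp.toLp_neg]

theorem act3_eq_act3_transpose_mul {Rs : Mat3} (hRs : Rs.transpose * Rs = 1) (Rt : Mat3)
    (x : R3) : act3 Rt x = act3 Rs (act3 (Rs.transpose * Rt) x) := by
  rw [← act3_mul, ← mul_assoc, mul_eq_one_comm.mp hRs, one_mul]

theorem act2_mul (A B : Matrix (Fin 2) (Fin 2) ℝ) (k : R2) :
    act2 (A * B) k = act2 A (act2 B k) := by
  simp only [act2, Matrix.mulVec_mulVec]

theorem act2_one (k : R2) : act2 1 k = k := by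
  simp only [act2, Matrix.one_mulVec]

theorem rot2_mul_rot2_neg (α : ℝ) : rot2 α * rot2 (-α) = 1 := by
  simp [rot2, mul_comm, ← sq, ← Matrix.one_fin_two]

theorem rot2_transpose (α : ℝ) : (rot2 α).transpose = rot2 (-α) := by
  ext i j
  fin_cases i <;> fin_cases j <;> simp [rot2]

theorem rot2_transpose_mul_self (α : ℝ) : (rot2 α).transpose * rot2 α = 1 := by
  simpa [rot2_transpose] using rot2_mul_rot2_neg (-α)

theorem Smat_mul_self : Smat * Smat = 1 := by
  simp [Smat, ← Matrix.one_fin_two]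

theorem Smat_transpose_mul_self : Smat.transpose * Smat = 1 := by
  rw [show Smat.transpose = Smat by ext i j; fin_cases i <;> fin_cases j <;> rfl, Smat_mul_self]

theorem kappa_act2 (k0 : ℝ) {Q : Matrix (Fin 2) (Fin 2) ℝ} (hQ : Q.transpose * Q = 1) (k : R2) :
    kappa k0 (act2 Q k) = kappa k0 k := by
  rw [kappa, kappa, act2, norm_toLp_mulVec hQ]

theorem act3_Q3mat_hmap (k0 α : ℝ) (k : R2) :
    act3 (Q3mat α) (hmap k0 k) = hmap k0 (act2 (rot2 α) k) := by
  rw [hmap, hmap, kappa_act2 k0 (rot2_transpose_mul_self α)]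
  ext i
  fin_cases i <;> simp [act3, act2, Q3mat, rot2, dotProduct, Fin.sum_univ_two] <;> ring

theorem act3_Q2mat_pi_hmap (k0 : ℝ) (k : R2) :
    act3 (Q2mat π) (hmap k0 k) = -hmap k0 (act2 Smat k) := by
  rw [hmap, hmap, kappa_act2 k0 Smat_transpose_mul_self]
  ext i
  fin_cases i <;> simp [act3, act2, Q2mat, Smat, dotProduct, Fin.sum_univ_two]

theorem act3_Q3mat_hmap_rot2_neg (k0 α : ℝ) (k : R2) :
    act3 (Q3mat α) (hmap k0 (act2 (rot2 (-α)) k)) = hmap k0 k := by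
  rw [act3_Q3mat_hmap, ← act2_mul, rot2_mul_rot2_neg, act2_one]

theorem act3_Q2mat_pi_mul_Q3mat_hmap_rot2_neg_mul_Smat (k0 α : ℝ) (k : R2) :
    act3 (Q2mat π * Q3mat α) (hmap k0 (act2 (rot2 (-α) * Smat) k)) = -hmap k0 k := by
  rw [act3_mul, act3_Q3mat_hmap, ← act2_mul, ← mul_assoc, rot2_mul_rot2_neg, one_mul,
    act3_Q2mat_pi_hmap, ← act2_mul, Smat_mul_self, act2_one]

theorem FT_neg (f : R3 → ℝ) (y : R3) : FT f (-y) = starRingEnd ℂ (FT f y) := by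
  rw [FT, FT, map_mul, Complex.conj_ofReal, ← integral_conj]
  congr 1
  refine integral_congr_ae (Filter.Eventually.of_forall fun x => ?_)
  simp only [map_mul, Complex.conj_ofReal, ← Complex.exp_conj, inner_neg_right, map_neg,
    Complex.conj_I]
  push_cast
  ring_nf

theorem muData_eq_of_act3_hmap_eq {k0 : ℝ} (f : R3 → ℝ) {R : Mat3} (hR : R.transpose * R = 1)
    (d : R3) {k : R2} {y : R3} (hy : act3 R (hmap k0 k) = y) :
    muData k0 f R d k = FT f y * Complex.exp (-Complex.I * (⟪act3 R d, y⟫ : ℝ)) := by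
  rw [muData, ← hy, act3, act3, inner_toLp_mulVec_toLp_mulVec hR]

theorem conj_muData_of_act3_hmap_eq_neg {k0 : ℝ} (f : R3 → ℝ) {R : Mat3}
    (hR : R.transpose * R = 1) (d : R3) {k : R2} {y : R3} (hy : act3 R (hmap k0 k) = -y) :
    starRingEnd ℂ (muData k0 f R d k)
      = FT f y * Complex.exp (-Complex.I * (⟪act3 R d, y⟫ : ℝ)) := by
  rw [muData_eq_of_act3_hmap_eq f hR d hy, map_mul, FT_neg, Complex.conj_conj,
    ← Complex.exp_conj, inner_neg_right]
  simp only [map_mul, map_neg, Complex.conj_I, Complex.conj_ofReal, Complex.ofReal_neg]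
  ring_nf

theorem exp_inner_sub_eq_div {E : Type*} [NormedAddCommGroup E] [InnerProductSpace ℝ E]
    {F : ℂ} (hF : F ≠ 0) (u v y : E) :
    Complex.exp (Complex.I * (⟪v - u, y⟫ : ℝ))
      = F * Complex.exp (-Complex.I * (⟪u, y⟫ : ℝ))
        / (F * Complex.exp (-Complex.I * (⟪v, y⟫ : ℝ))) := by
  rw [mul_div_mul_left _ _ hF, ← Complex.exp_sub, inner_sub_left]
  push_cast
  ring_nf

theorem phase_shift_special_cases_general (k0 : ℝ) (f : R3 → ℝ)
    (Rs Rt : Mat3) (hRs : SO3 Rs) (hRt : SO3 Rt)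
    (ds dt : R3) :
    (rotE3 Rs = rotE3 Rt →
      ∀ α : ℝ, Rs.transpose * Rt = Q3mat α →
        ∀ k ∈ ball2 k0, muData k0 f Rs ds k ≠ 0 →
          Complex.exp (Complex.I * (⟪act3 Rt dt - act3 Rs ds, act3 Rs (hmap k0 k)⟫ : ℝ))
            = muData k0 f Rs ds k / muData k0 f Rt dt (act2 (rot2 (-α)) k)) ∧
    (rotE3 Rs = -rotE3 Rt →
      ∀ α : ℝ, Rs.transpose * Rt = Q2mat π * Q3mat α →
        ∀ k ∈ ball2 k0, muData k0 f Rs ds k ≠ 0 →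
          Complex.exp (Complex.I * (⟪act3 Rt dt - act3 Rs ds, act3 Rs (hmap k0 k)⟫ : ℝ))
            = muData k0 f Rs ds k
                / (starRingEnd ℂ) (muData k0 f Rt dt (act2 (rot2 (-α) * Smat) k))) := by
  refine ⟨fun _ α hQ k _ hne => ?_, fun _ α hQ k _ hne => ?_⟩
  · have hk : act3 Rt (hmap k0 (act2 (rot2 (-α)) k)) = act3 Rs (hmap k0 k) := by
      rw [act3_eq_act3_transpose_mul hRs.1, hQ, act3_Q3mat_hmap_rot2_neg]
    rw [muData_eq_of_act3_hmap_eq f hRs.1 ds rfl] at hne ⊢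
    rw [muData_eq_of_act3_hmap_eq f hRt.1 dt hk]
    exact exp_inner_sub_eq_div (left_ne_zero_of_mul hne) _ _ _
  · have hk : act3 Rt (hmap k0 (act2 (rot2 (-α) * Smat) k)) = -act3 Rs (hmap k0 k) := by
      rw [act3_eq_act3_transpose_mul hRs.1, hQ, act3_Q2mat_pi_mul_Q3mat_hmap_rot2_neg_mul_Smat,
        act3_neg]
    rw [muData_eq_of_act3_hmap_eq f hRs.1 ds rfl] at hne ⊢
    rw [conj_muData_of_act3_hmap_eq_neg f hRt.1 dt hk]
    exact exp_inner_sub_eq_div (left_ne_zero_of_mul hne) _ _ _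

/-- Lemma: phase shift in the special cases `Rs·e3 = ±Rt·e3`.
(i) If `Rs·e3 = Rt·e3` and `Rsᵀ Rt = Q³(α)`, then for all `k ∈ B` with `μ_s(k) ≠ 0`,
`e^{i⟨R_t d_t − R_s d_s, R_s h(k)⟩} = μ_s(k) / μ_t(Q(−α)·k)`.
(ii) If `Rs·e3 = −Rt·e3` and `Rsᵀ Rt = Q²(π)·Q³(α)`, then for all `k ∈ B` with `μ_s(k) ≠ 0`,
`e^{i⟨R_t d_t − R_s d_s, R_s h(k)⟩} = μ_s(k) / conj(μ_t(Q(−α)·S·k))`. -/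
theorem phase_shift_special_cases (k0 : ℝ) (hk0 : 0 < k0) (f : R3 → ℝ)
    (hf : MeasureTheory.Integrable f) (Rs Rt : Mat3) (hRs : SO3 Rs) (hRt : SO3 Rt)
    (ds dt : R3) :
    (rotE3 Rs = rotE3 Rt →
      ∀ α : ℝ, Rs.transpose * Rt = Q3mat α →
        ∀ k ∈ ball2 k0, muData k0 f Rs ds k ≠ 0 →
          Complex.exp (Complex.I * (⟪act3 Rt dt - act3 Rs ds, act3 Rs (hmap k0 k)⟫ : ℝ))
            = muData k0 f Rs ds k / muData k0 f Rt dt (act2 (rot2 (-α)) k)) ∧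
    (rotE3 Rs = -rotE3 Rt →
      ∀ α : ℝ, Rs.transpose * Rt = Q2mat π * Q3mat α →
        ∀ k ∈ ball2 k0, muData k0 f Rs ds k ≠ 0 →
          Complex.exp (Complex.I * (⟪act3 Rt dt - act3 Rs ds, act3 Rs (hmap k0 k)⟫ : ℝ))
            = muData k0 f Rs ds k
                / (starRingEnd ℂ) (muData k0 f Rt dt (act2 (rot2 (-α) * Smat) k))) :=
  phase_shift_special_cases_general k0 f Rs Rt hRs hRt ds dt
end
end

section
/- Let k0 > 0, let f : ℝ³ → ℝ be integrable with compact support, and let R : ℝ → SO(3) be continuously differentiable with angular velocity ω_t = (ρ_t·φ_{t,1}, ρ_t·φ_{t,2}, ζ_t) in cylindrical coordinates. Then for every t ∈ ℝ and every r ∈ ℝ with |r| > k0: ∂_t ν̃_t(r·φ_t) = (k0·ρ_t + r·ζ_t) · ⟨∇ν̃_t(r·φ_t), (−φ_{t,2}, φ_{t,1})⟩, where ∂_t ν̃_t(y) denotes the derivative of s ↦ ν̃_s(y) at s = t (with y fixed) and ∇ν̃_t(y) the gradient of ν̃_t with respect to y. -/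
noncomputable section
open Real Set MeasureTheory
open scoped RealInnerProductSpace

/-- The half unit circle `S¹₊ = {(cos α, sin α) : α ∈ [0, π)}`. -/
def S1plus : Set R2 :=
  {v | ∃ α : ℝ, 0 ≤ α ∧ α < π ∧ v = (![Real.cos α, Real.sin α] : Fin 2 → ℝ)}

/-- Rotation of a planar vector by 90 degrees: `(φ₁, φ₂) ↦ (−φ₂, φ₁)`. -/
def rot90 (v : R2) : R2 := WithLp.toLp 2 (![-(v 1), v 0] : Fin 2 → ℝ)

/-- Inverse of `τ`: `τ⁻¹(y) = (2k0²/(k0² + ‖y‖²))·y`. -/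
def tauInv (k0 : ℝ) (y : R2) : R2 := (2 * k0 ^ 2 / (k0 ^ 2 + ‖y‖ ^ 2)) • y

/-- The transformed scaled squared energy `ν̃_R = ν_R ∘ τ⁻¹`. -/
def nuT (k0 : ℝ) (f : R3 → ℝ) (R : Mat3) (y : R2) : ℝ := nu k0 f R (tauInv k0 y)

/-!
For `‖y‖ > k0` the point `h(τ⁻¹ y)` equals `c(y) • (y, -k0)` with `c(y) = 2k0²/(k0² + ‖y‖²)`,
so the square root in `κ` disappears. Since `c` depends on `y` only through `‖y‖²`, the
derivative of this map in a direction `v ⟂ y` is just `c(y) • (v, 0)`; with `v = φ^⊥` this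
computes the gradient side. On the time side, `d/dt R_t x = R_t (ω_t × x)`, and for
`x = c(y) • (r φ, -k0)` and `ω_t = (ρ φ, ζ)` the cross product is
`c(y) (k0 ρ + r ζ) • (φ^⊥, 0)`. Both sides thus equal
`(k0 ρ + r ζ) c(y) D(|𝓕f|²)(R_t x) (R_t (φ^⊥, 0))`.
-/

open scoped FourierTransform Topology Matrix

lemma HasCompactSupport.integrable_norm_mul_norm {V E : Type*} [NormedAddCommGroup V]
    [MeasurableSpace V] [OpensMeasurableSpace V] [NormedAddCommGroup E] {μ : Measure V}
    {f : V → E} (hf : Integrable f μ) (hsupp : HasCompactSupport f) :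
    Integrable (fun v => ‖v‖ * ‖f v‖) μ := by
  have hsub : Function.support (fun v => ‖v‖ * ‖f v‖) ⊆ tsupport (‖f ·‖) :=
    (Function.support_mul_subset_right _ _).trans (subset_tsupport _)
  exact (integrableOn_iff_integrable_of_support_subset hsub).mp <|
    hf.norm.integrableOn.continuousOn_mul continuous_norm.continuousOn hsupp.norm.isCompact

lemma FT_eq_smul_fourier (f : R3 → ℝ) (y : R3) :
    FT f y =
      ((2 * π) ^ (-(3 : ℝ) / 2) : ℝ) • 𝓕 (fun x => (f x : ℂ)) ((2 * π)⁻¹ • y) := by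
  rw [FT, Real.fourier_eq', Complex.real_smul]
  congr 1
  refine integral_congr_ae (Filter.Eventually.of_forall fun x => ?_)
  have h2π : 2 * π ≠ 0 := by positivity
  simp only [real_inner_smul_right, smul_eq_mul]
  rw [show -2 * π * ((2 * π)⁻¹ * ⟪x, y⟫) = -⟪x, y⟫ by field_simp, mul_comm]
  push_cast
  ring_nf

lemma differentiable_FT {f : R3 → ℝ} (hf : Integrable f) (hsupp : HasCompactSupport f) :
    Differentiable ℝ (FT f) := by
  have hfourier : Differentiable ℝ (𝓕 fun x => (f x : ℂ)) :=
    Real.differentiable_fourier hf.ofReal <| by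
      simpa using HasCompactSupport.integrable_norm_mul_norm hf hsupp
  rw [funext (FT_eq_smul_fourier f)]
  exact (hfourier.comp (differentiable_id.fun_const_smul _)).fun_const_smul _

lemma act3_eq_toEuclideanCLM (M : Mat3) : act3 M = Matrix.toEuclideanCLM (𝕜 := ℝ) M := rfl

lemma act3_smul (M : Mat3) (c : ℝ) (x : R3) : act3 M (c • x) = c • act3 M x :=
  map_smul (Matrix.toEuclideanCLM (𝕜 := ℝ) M) c x

lemma act3_transpose_mul {R : Mat3} (hR : Rᵀ * R = 1) (M : Mat3) (x : R3) :
    act3 R (act3 (Rᵀ * M) x) = act3 M x := by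
  simp [act3, Matrix.mulVec_mulVec, ← Matrix.mul_assoc, mul_eq_one_comm.mp hR]

def planeEmbedding : R2 →L[ℝ] R3 :=
  LinearMap.toContinuousLinearMap
    { toFun := fun v => WithLp.toLp 2 ![v 0, v 1, 0]
      map_add' := fun v w => by ext i; fin_cases i <;> simp
      map_smul' := fun c v => by ext i; fin_cases i <;> simp }

/-- Inverse of the stereographic projection of the sphere `‖x + k0 e3‖ = k0` from its pole `0`
onto its equatorial plane `z = -k0`. -/
def invStereo (k0 : ℝ) (y : R2) : R3 :=
  (2 * k0 ^ 2 / (k0 ^ 2 + ‖y‖ ^ 2)) • (planeEmbedding y - k0 • e3)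

lemma kappa_tauInv {k0 : ℝ} (hk0 : 0 < k0) {y : R2} (hy : k0 ≤ ‖y‖) :
    kappa k0 (tauInv k0 y) = k0 * (‖y‖ ^ 2 - k0 ^ 2) / (k0 ^ 2 + ‖y‖ ^ 2) := by
  have hpos : 0 < k0 ^ 2 + ‖y‖ ^ 2 := by positivity
  have hsq : k0 ^ 2 ≤ ‖y‖ ^ 2 := pow_le_pow_left₀ hk0.le hy 2
  rw [kappa, tauInv, norm_smul, Real.norm_of_nonneg (by positivity), ← Real.sqrt_sq
    (div_nonneg (mul_nonneg hk0.le (sub_nonneg.mpr hsq)) hpos.le)]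
  congr 1
  field_simp
  ring

lemma hmap_tauInv {k0 : ℝ} (hk0 : 0 < k0) {y : R2} (hy : k0 ≤ ‖y‖) :
    hmap k0 (tauInv k0 y) = invStereo k0 y := by
  have hpos : 0 < k0 ^ 2 + ‖y‖ ^ 2 := by positivity
  ext i
  fin_cases i
  · simp [hmap, invStereo, planeEmbedding, tauInv, e3]
  · simp [hmap, invStereo, planeEmbedding, tauInv, e3]
  · simp [hmap, invStereo, planeEmbedding, e3, kappa_tauInv hk0 hy]
    field_simp
    ring

lemma norm_eq_one_of_mem_S1plus {φ : R2} (hφ : φ ∈ S1plus) : ‖φ‖ = 1 := by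
  obtain ⟨α, -, -, hα⟩ := hφ
  simp [EuclideanSpace.norm_eq, hα]

lemma inner_rot90_smul_self (r : ℝ) (φ : R2) : ⟪r • φ, rot90 φ⟫ = 0 := by
  simp [rot90, PiLp.inner_apply, Fin.sum_univ_two]
  ring

lemma cross3_invStereo_smul {ω : R3} {ρ ζ : ℝ} {φ : R2}
    (hω : ω = (![ρ * φ 0, ρ * φ 1, ζ] : Fin 3 → ℝ)) (k0 r : ℝ) :
    cross3 ω (invStereo k0 (r • φ)) =
      (2 * k0 ^ 2 / (k0 ^ 2 + ‖r • φ‖ ^ 2) * (k0 * ρ + r * ζ)) •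
        planeEmbedding (rot90 φ) := by
  ext i
  fin_cases i <;> simp [cross3, hω, invStereo, planeEmbedding, rot90, e3, crossProduct] <;> ring

lemma hasFDerivAt_smul_norm_sq {E F : Type*} [NormedAddCommGroup E] [InnerProductSpace ℝ E]
    [NormedAddCommGroup F] [NormedSpace ℝ F] {g : ℝ → ℝ} {g' : ℝ} {a : E → F}
    {a' : E →L[ℝ] F} {y : E} (hg : HasDerivAt g g' (‖y‖ ^ 2)) (ha : HasFDerivAt a a' y) :
    HasFDerivAt (fun x => g (‖x‖ ^ 2) • a x)
      (g (‖y‖ ^ 2) • a' + (g' • 2 • innerSL ℝ y).smulRight (a y)) y := by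
  simpa using (hg.comp_hasFDerivAt y (hasFDerivAt_id y).norm_sq).fun_smul ha

lemma hasFDerivAt_invStereo {k0 : ℝ} (hk0 : k0 ≠ 0) (y : R2) :
    ∃ D : R2 →L[ℝ] R3, HasFDerivAt (invStereo k0) D y ∧
      ∀ v, ⟪y, v⟫ = 0 →
        D v = (2 * k0 ^ 2 / (k0 ^ 2 + ‖y‖ ^ 2)) • planeEmbedding v := by
  have hg : DifferentiableAt ℝ (fun q : ℝ => 2 * k0 ^ 2 / (k0 ^ 2 + q)) (‖y‖ ^ 2) := by
    fun_prop (disch := positivity)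
  refine ⟨_, hasFDerivAt_smul_norm_sq hg.hasDerivAt
    (planeEmbedding.hasFDerivAt.sub_const (k0 • e3)), fun v hv => ?_⟩
  simp [hv]

lemma inner_gradient_comp_hmap_tauInv {F : R3 → ℝ} {k0 : ℝ} (hk0 : 0 < k0) (R : Mat3)
    {y v : R2} (hy : k0 < ‖y‖) (hv : ⟪y, v⟫ = 0)
    (hF : DifferentiableAt ℝ F (act3 R (invStereo k0 y))) :
    ⟪gradient (fun y => F (act3 R (hmap k0 (tauInv k0 y)))) y, v⟫ =
      2 * k0 ^ 2 / (k0 ^ 2 + ‖y‖ ^ 2) *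
        fderiv ℝ F (act3 R (invStereo k0 y)) (act3 R (planeEmbedding v)) := by
  have hlocal : (fun y => F (act3 R (hmap k0 (tauInv k0 y)))) =ᶠ[𝓝 y]
      fun y => F (act3 R (invStereo k0 y)) := by
    filter_upwards [continuousAt_const.eventually_lt continuous_norm.continuousAt hy]
      with z hz
    rw [hmap_tauInv hk0 hz.le]
  obtain ⟨D, hD, hDv⟩ := hasFDerivAt_invStereo hk0.ne' y
  have hcomp : HasFDerivAt (fun y => F (act3 R (invStereo k0 y))) _ y :=
    hF.hasFDerivAt.comp y ((Matrix.toEuclideanCLM (𝕜 := ℝ) R).hasFDerivAt.comp y hD)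
  rw [gradient, InnerProductSpace.toDual_symm_apply, hlocal.fderiv_eq, hcomp.fderiv]
  simp [hDv v hv, act3_eq_toEuclideanCLM]

lemma hasDerivAt_act3 {R : ℝ → Mat3} {R' : Mat3} {t : ℝ}
    (hderiv : ∀ i j, HasDerivAt (fun s => R s i j) (R' i j) t) (x : R3) :
    HasDerivAt (fun s => act3 (R s) x) (act3 R' x) t := by
  have hcoord : HasDerivAt (fun s => R s *ᵥ x) (R' *ᵥ x) t := by
    refine hasDerivAt_pi.mpr fun i => ?_
    simp only [Matrix.mulVec, dotProduct]
    exact HasDerivAt.fun_sum fun j _ => (hderiv i j).mul_const (x j)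
  exact (PiLp.continuousLinearEquiv 2 ℝ _).symm.hasFDerivAt.comp_hasDerivAt t hcoord

lemma hasDerivAt_comp_act3_of_angularVelocity {F : R3 → ℝ} {R : ℝ → Mat3} {R' : Mat3}
    {t : ℝ} {ω x : R3} (hR : (R t)ᵀ * R t = 1)
    (hderiv : ∀ i j, HasDerivAt (fun s => R s i j) (R' i j) t)
    (hω : ∀ y, act3 ((R t)ᵀ * R') y = cross3 ω y)
    (hF : DifferentiableAt ℝ F (act3 (R t) x)) :
    HasDerivAt (fun s => F (act3 (R s) x))
      (fderiv ℝ F (act3 (R t) x) (act3 (R t) (cross3 ω x))) t := by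
  rw [← hω, act3_transpose_mul hR]
  exact hF.hasFDerivAt.comp_hasDerivAt t (hasDerivAt_act3 hderiv x)

theorem infinitesimal_common_circle_stereo_general (k0 : ℝ) (hk0 : 0 < k0) (f : R3 → ℝ)
    (hf : MeasureTheory.Integrable f) (hsupp : HasCompactSupport f)
    (R R' : ℝ → Mat3) (hSO : ∀ t, SO3 (R t))
    (hderiv : ∀ t i j, HasDerivAt (fun s => R s i j) (R' t i j) t)
    (ω : ℝ → R3)
    (hω : ∀ t (y : R3), act3 ((R t).transpose * R' t) y = cross3 (ω t) y)
    (ρ ζ : ℝ → ℝ) (φ : ℝ → R2) (hφ : ∀ t, φ t ∈ S1plus)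
    (hcyl : ∀ t, ω t = (![ρ t * φ t 0, ρ t * φ t 1, ζ t] : Fin 3 → ℝ)) :
    ∀ (t r : ℝ), k0 < |r| →
      deriv (fun s => nuT k0 f (R s) (r • φ t)) t
        = (k0 * ρ t + r * ζ t)
            * ⟪gradient (nuT k0 f (R t)) (r • φ t), rot90 (φ t)⟫ := by
  intro t r hr
  set y := r • φ t
  have hy : k0 < ‖y‖ := by rwa [norm_smul, norm_eq_one_of_mem_S1plus (hφ t), mul_one]
  have hF : Differentiable ℝ (‖FT f ·‖ ^ 2) := (differentiable_FT hf hsupp).norm_sq ℝ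
  have hnu : ∀ s, nuT k0 f (R s) y = ‖FT f (act3 (R s) (invStereo k0 y))‖ ^ 2 := fun s => by
    rw [nuT, nu, hmap_tauInv hk0 hy.le]
  have htime := hasDerivAt_comp_act3_of_angularVelocity (x := invStereo k0 y) (hSO t).1
    (hderiv t) (hω t) (hF _)
  have hgrad : ⟪gradient (nuT k0 f (R t)) y, rot90 (φ t)⟫ = _ :=
    inner_gradient_comp_hmap_tauInv (F := (‖FT f ·‖ ^ 2)) hk0 (R t) hy
      (inner_rot90_smul_self r (φ t)) (hF _)
  rw [funext hnu, htime.deriv, cross3_invStereo_smul (hcyl t), act3_smul, map_smul,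
    smul_eq_mul, hgrad]
  ring

/-- Lemma: infinitesimal common circle relation after stereographic
projection.  With the transformed scaled squared energy `ν̃_t = ν_t ∘ τ⁻¹` and the angular
velocity `ω_t = (ρ_t φ_{t,1}, ρ_t φ_{t,2}, ζ_t)` in cylindrical coordinates, for every `t`
and every `r` with `|r| > k0`,
`∂_t ν̃_t(r φ_t) = (k0 ρ_t + r ζ_t) ⟨∇ν̃_t(r φ_t), (−φ_{t,2}, φ_{t,1})⟩`. -/
theorem infinitesimal_common_circle_stereo (k0 : ℝ) (hk0 : 0 < k0) (f : R3 → ℝ)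
    (hf : MeasureTheory.Integrable f) (hsupp : HasCompactSupport f)
    (R R' : ℝ → Mat3) (hSO : ∀ t, SO3 (R t))
    (hderiv : ∀ t i j, HasDerivAt (fun s => R s i j) (R' t i j) t)
    (hcont : ∀ i j, Continuous fun t => R' t i j)
    (ω : ℝ → R3)
    (hω : ∀ t (y : R3), act3 ((R t).transpose * R' t) y = cross3 (ω t) y)
    (ρ ζ : ℝ → ℝ) (φ : ℝ → R2) (hφ : ∀ t, φ t ∈ S1plus)
    (hcyl : ∀ t, ω t = (![ρ t * φ t 0, ρ t * φ t 1, ζ t] : Fin 3 → ℝ)) :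
    ∀ (t r : ℝ), k0 < |r| →
      deriv (fun s => nuT k0 f (R s) (r • φ t)) t
        = (k0 * ρ t + r * ζ t)
            * ⟪gradient (nuT k0 f (R t)) (r • φ t), rot90 (φ t)⟫ :=
  infinitesimal_common_circle_stereo_general k0 hk0 f hf hsupp R R' hSO hderiv ω hω ρ ζ φ hφ hcyl
end
end
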